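/- arXiv:2507.23074 — 3 statements merged into one kernel-verified Lean document; each statement's English description precedes it below -/
import Mathlib

section
/- Let θ ∈ [0, π/2) and k ≥ 0 an integer, and define the quadrant index l(k) = ⌊(2k+1)θ / (π/2)⌋. Then 0 ≤ l(k) ≤ 2k, and sin²((2k+1)θ) determines θ uniquely once l(k) is known: θ = (1/(2k+1))(arcsin(√p) + l(k)·π/2) if l(k) is even and θ = (1/(2k+1))(arccos(√p) + l(k)·π/2) if l(k) is odd, where p = sin²((2k+1)θ). -/
open Real

theorem stmt_3 (k : ℕ) (θ : ℝ) (hθ : θ ∈ Set.Ico 0 (π / 2))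
    (l : ℤ) (hl : l = ⌊(2 * (k : ℝ) + 1) * θ / (π / 2)⌋)
    (p : ℝ) (hp : p = Real.sin ((2 * (k : ℝ) + 1) * θ) ^ 2) :
    0 ≤ l ∧ l ≤ 2 * k ∧
    θ = (1 / (2 * (k : ℝ) + 1)) *
      ((if Even l then Real.arcsin (Real.sqrt p) else Real.arccos (Real.sqrt p))
        + (l : ℝ) * (π / 2)) := by
  obtain ⟨hθ0, hθ1⟩ := hθ
  have hπ : (0:ℝ) < π / 2 := by positivity
  set φ : ℝ := (2 * (k : ℝ) + 1) * θ with hφdef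
  have hk0 : (0:ℝ) < 2 * (k : ℝ) + 1 := by positivity
  have hφ0 : 0 ≤ φ := mul_nonneg hk0.le hθ0
  have hl0 : 0 ≤ l := by
    rw [hl]; exact Int.floor_nonneg.2 (div_nonneg hφ0 hπ.le)
  have hφlt : φ < (2 * (k : ℝ) + 1) * (π / 2) :=
    mul_lt_mul_of_pos_left hθ1 hk0
  have hlle : l ≤ 2 * k := by
    have : l < 2 * (k : ℤ) + 1 := by
      rw [hl, Int.floor_lt]
      push_cast
      rw [div_lt_iff₀ hπ]
      linarith
    omega
  refine ⟨hl0, hlle, ?_⟩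
  set x : ℝ := φ - l * (π / 2) with hxdef
  have hx0 : 0 ≤ x := by
    have := Int.sub_floor_div_mul_nonneg φ hπ
    rwa [← hl] at this
  have hx1 : x < π / 2 := by
    have := Int.sub_floor_div_mul_lt φ hπ
    rwa [← hl] at this
  clear_value x
  have hsqrt : Real.sqrt p = |Real.sin φ| := by
    rw [hp, Real.sqrt_sq_eq_abs]
  have hkey : (if Even l then Real.arcsin (Real.sqrt p) else Real.arccos (Real.sqrt p)) = x := by
    rcases Int.even_or_odd l with ⟨m, hm⟩ | ⟨m, hm⟩
    · rw [if_pos ⟨m, hm⟩]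
      have hφx : φ = x + m * π := by
        rw [hxdef, hm]; push_cast; ring
      have habs : |((-1:ℝ)) ^ m| = 1 := by
        rcases Int.even_or_odd m with h | h
        · rw [h.neg_one_zpow, abs_one]
        · rw [h.neg_one_zpow, abs_neg, abs_one]
      rw [hsqrt, hφx, Real.sin_add_int_mul_pi, abs_mul, habs, one_mul, abs_of_nonneg (Real.sin_nonneg_of_nonneg_of_le_pi hx0 (by linarith [Real.pi_pos]))]
      exact Real.arcsin_sin (by linarith [Real.pi_pos]) (by linarith [Real.pi_pos])
    · rw [if_neg (by simp [hm, parity_simps])]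
      have hφx : φ = (x + π / 2) + m * π := by
        rw [hxdef, hm]; push_cast; ring
      have habs : |((-1:ℝ)) ^ m| = 1 := by
        rcases Int.even_or_odd m with h | h
        · rw [h.neg_one_zpow, abs_one]
        · rw [h.neg_one_zpow, abs_neg, abs_one]
      rw [hsqrt, hφx, Real.sin_add_int_mul_pi, abs_mul, habs, one_mul, Real.sin_add_pi_div_two,
        abs_of_nonneg (Real.cos_nonneg_of_mem_Icc ⟨by linarith, hx1.le⟩)]
      exact Real.arccos_cos hx0 (by linarith [Real.pi_pos])
  rw [hkey, hxdef]
  field_simp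
  ring
end

section
/- The Beta function B(α, β) = ∫₀¹ t^{α-1}(1-t)^{β-1} dt is strictly log-convex on (0,∞)², i.e., for (α₁,β₁) ≠ (α₂,β₂) in (0,∞)² and u, v > 0 with u + v = 1, B(uα₁+vα₂, uβ₁+vβ₂) < B(α₁,β₁)^u · B(α₂,β₂)^v. -/
open Real MeasureTheory

open Set

/-- The Euler Beta function as a real integral. -/
noncomputable def betaFun (α β : ℝ) : ℝ :=
  ∫ t in (0 : ℝ)..1, t ^ (α - 1) * (1 - t) ^ (β - 1)

lemma beta_integrand_integrable {a b : ℝ} (ha : 0 < a) (hb : 0 < b) :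
    IntervalIntegrable (fun t : ℝ => t ^ (a - 1) * (1 - t) ^ (b - 1)) volume 0 1 := by
  have h := (Complex.betaIntegral_convergent (u := a) (v := b) (by simpa) (by simpa)).norm
  rw [intervalIntegrable_iff_integrableOn_Ioc_of_le (by norm_num)] at h ⊢
  refine h.congr_fun ?_ measurableSet_Ioc
  intro x hx
  have hx0 : (0:ℝ) < x := hx.1
  have hx1 : (0:ℝ) ≤ 1 - x := by linarith [hx.2]
  show ‖_ * _‖ = _
  have e1 : ((1:ℂ) - x) = ((1 - x : ℝ) : ℂ) := by push_cast; ring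
  have e2 : ((a:ℂ) - 1) = ((a - 1 : ℝ) : ℂ) := by push_cast; ring
  have e3 : ((b:ℂ) - 1) = ((b - 1 : ℝ) : ℂ) := by push_cast; ring
  rw [e1, e2, e3, norm_mul,
    Complex.norm_cpow_eq_rpow_re_of_pos hx0]
  simp only [Complex.ofReal_re]
  rcases eq_or_lt_of_le hx1 with h1 | h1
  · rw [← h1]
    rcases eq_or_ne b 1 with hb1 | hb1
    · subst hb1; norm_num
    · have : ((b - 1 : ℝ) : ℂ) ≠ 0 := by
        exact_mod_cast Complex.ofReal_ne_zero.mpr (sub_ne_zero.mpr hb1)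
      rw [Complex.ofReal_zero, Complex.zero_cpow this, Real.zero_rpow (sub_ne_zero.mpr hb1)]
      simp
  · rw [Complex.norm_cpow_eq_rpow_re_of_pos h1]
    simp

lemma betaFun_pos {a b : ℝ} (ha : 0 < a) (hb : 0 < b) : 0 < betaFun a b := by
  refine intervalIntegral.intervalIntegral_pos_of_pos_on
    (beta_integrand_integrable ha hb) (fun x hx => ?_) one_pos
  have hx0 : (0:ℝ) < x := hx.1
  have hx1 : (0:ℝ) < 1 - x := by linarith [hx.2]
  positivity

lemma amgm_strict {p q w₁ w₂ : ℝ} (hp : 0 < p) (hq : 0 < q) (hw₁ : 0 < w₁) (hw₂ : 0 < w₂)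
    (hw : w₁ + w₂ = 1) (hpq : p ≠ q) : p ^ w₁ * q ^ w₂ < w₁ * p + w₂ * q := by
  have hlog : Real.log p ≠ Real.log q := fun h => hpq (Real.log_injOn_pos
    (mem_Ioi.mpr hp) (mem_Ioi.mpr hq) h)
  have h2 := strictConvexOn_exp.2 (mem_univ (Real.log p)) (mem_univ (Real.log q)) hlog hw₁ hw₂ hw
  simp only [smul_eq_mul, Real.exp_add, Real.exp_log hp, Real.exp_log hq] at h2
  rw [Real.rpow_def_of_pos hp, Real.rpow_def_of_pos hq, mul_comm (Real.log p),
    mul_comm (Real.log q)]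
  exact h2

set_option maxHeartbeats 1000000 in
theorem stmt_5 (α₁ β₁ α₂ β₂ u v : ℝ)
    (hα₁ : 0 < α₁) (hβ₁ : 0 < β₁) (hα₂ : 0 < α₂) (hβ₂ : 0 < β₂)
    (hne : (α₁, β₁) ≠ (α₂, β₂)) (hu : 0 < u) (hv : 0 < v) (huv : u + v = 1) :
    betaFun (u * α₁ + v * α₂) (u * β₁ + v * β₂)
      < betaFun α₁ β₁ ^ u * betaFun α₂ β₂ ^ v := by
  set a := u * α₁ + v * α₂ with ha_def
  set b := u * β₁ + v * β₂ with hb_def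
  have ha : 0 < a := by positivity
  have hb : 0 < b := by positivity
  set f : ℝ → ℝ := fun t => t ^ (α₁ - 1) * (1 - t) ^ (β₁ - 1) with hf_def
  set g : ℝ → ℝ := fun t => t ^ (α₂ - 1) * (1 - t) ^ (β₂ - 1) with hg_def
  set F := betaFun α₁ β₁ with hF_def
  set G := betaFun α₂ β₂ with hG_def
  have hF : 0 < F := betaFun_pos hα₁ hβ₁
  have hG : 0 < G := betaFun_pos hα₂ hβ₂
  have hif : IntervalIntegrable f volume 0 1 := beta_integrand_integrable hα₁ hβ₁
  have hig : IntervalIntegrable g volume 0 1 := beta_integrand_integrable hα₂ hβ₂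
  have hic : IntervalIntegrable (fun t : ℝ => t ^ (a - 1) * (1 - t) ^ (b - 1)) volume 0 1 :=
    beta_integrand_integrable ha hb
  -- positivity of integrands on Ioo
  have hfpos : ∀ t ∈ Ioo (0:ℝ) 1, 0 < f t := by
    intro t ht
    have h0 : (0:ℝ) < t := ht.1
    have h1 : (0:ℝ) < 1 - t := by linarith [ht.2]
    positivity
  have hgpos : ∀ t ∈ Ioo (0:ℝ) 1, 0 < g t := by
    intro t ht
    have h0 : (0:ℝ) < t := ht.1
    have h1 : (0:ℝ) < 1 - t := by linarith [ht.2]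
    positivity
  -- pointwise identity on Ioo
  have hcombo : ∀ t ∈ Ioo (0:ℝ) 1, t ^ (a - 1) * (1 - t) ^ (b - 1) = f t ^ u * g t ^ v := by
    intro t ht
    have h0 : (0:ℝ) < t := ht.1
    have h1 : (0:ℝ) < 1 - t := by linarith [ht.2]
    rw [hf_def, hg_def]
    simp only
    rw [Real.mul_rpow (by positivity) (by positivity),
        Real.mul_rpow (by positivity) (by positivity),
        ← Real.rpow_mul h0.le, ← Real.rpow_mul h1.le, ← Real.rpow_mul h0.le,
        ← Real.rpow_mul h1.le]
    rw [show t ^ ((α₁-1)*u) * (1-t) ^ ((β₁-1)*u) * (t ^ ((α₂-1)*v) * (1-t) ^ ((β₂-1)*v))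
        = (t ^ ((α₁-1)*u) * t ^ ((α₂-1)*v)) * ((1-t) ^ ((β₁-1)*u) * (1-t) ^ ((β₂-1)*v)) by ring,
      ← Real.rpow_add h0, ← Real.rpow_add h1]
    congr 2 <;> [skip; skip] <;> linear_combination huv

  -- log equation from pointwise proportionality
  have key : ∀ t ∈ Ioo (0:ℝ) 1, f t * G = g t * F →
      (α₁-1)*Real.log t + (β₁-1)*Real.log (1-t) + Real.log G
        = (α₂-1)*Real.log t + (β₂-1)*Real.log (1-t) + Real.log F := by
    intro t ht he
    have h0 : (0:ℝ) < t := ht.1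
    have h1 : (0:ℝ) < 1-t := by linarith [ht.2]
    have hl := congrArg Real.log he
    rw [Real.log_mul (hfpos t ht).ne' hG.ne', Real.log_mul (hgpos t ht).ne' hF.ne'] at hl
    rw [hf_def, hg_def] at hl
    simp only at hl
    rw [Real.log_mul (by positivity) (by positivity),
        Real.log_mul (by positivity) (by positivity),
        ] at hl
    simp only [Real.log_rpow h0, Real.log_rpow h1] at hl
    linarith
  have hlog2 : (0:ℝ) < Real.log 2 := Real.log_pos (by norm_num)
  have hlog32 : (0:ℝ) < Real.log 3 - Real.log 2 :=
    sub_pos.mpr (Real.log_lt_log (by norm_num) (by norm_num))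
  have hlog4 : Real.log (4:ℝ) = 2 * Real.log 2 := by
    rw [show (4:ℝ) = 2^(2:ℕ) by norm_num, Real.log_pow]; push_cast; ring
  have hlog34 : Real.log 3 - Real.log 2 < Real.log 2 := by
    have h34 : Real.log (3:ℝ) < Real.log 4 := Real.log_lt_log (by norm_num) (by norm_num)
    linarith
  have hex : ∃ t₀ ∈ Icc (1/4:ℝ) (3/4), f t₀ * G ≠ g t₀ * F := by
    by_contra hcon
    push_neg at hcon
    have e1 := key (1/4) (by norm_num) (hcon (1/4) (by norm_num))
    have e2 := key (1/2) (by norm_num) (hcon (1/2) (by norm_num))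
    have e3 := key (3/4) (by norm_num) (hcon (3/4) (by norm_num))
    rw [show (1:ℝ) - 1/4 = 3/4 by norm_num] at e1
    rw [show (1:ℝ) - 1/2 = 1/2 by norm_num] at e2
    rw [show (1:ℝ) - 3/4 = 1/4 by norm_num] at e3
    have l14 : Real.log (1/4:ℝ) = -(2 * Real.log 2) := by
      rw [one_div, Real.log_inv, hlog4]
    have l12 : Real.log (1/2:ℝ) = -Real.log 2 := by
      rw [one_div, Real.log_inv]
    have l34 : Real.log (3/4:ℝ) = Real.log 3 - 2 * Real.log 2 := by
      rw [Real.log_div (by norm_num) (by norm_num), hlog4]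
    rw [l14, l34] at e1
    rw [l12] at e2
    rw [l34, l14] at e3
    have hqp : ((Real.log 3 - Real.log 2)^2 - (Real.log 2)^2) ≠ 0 := by nlinarith
    have hA : α₁ = α₂ := by
      have h1 : ((Real.log 3 - Real.log 2)^2 - (Real.log 2)^2) * (α₁ - α₂) = 0 := by
        linear_combination (Real.log 2) * e1 - (Real.log 3) * e2
          + (Real.log 3 - Real.log 2) * e3
      rcases mul_eq_zero.mp h1 with h | h
      · exact absurd h hqp
      · linarith [sub_eq_zero.mp h]
    have hB : β₁ = β₂ := by
      have h1 : ((Real.log 3 - Real.log 2)^2 - (Real.log 2)^2) * (β₁ - β₂) = 0 := by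
        linear_combination (Real.log 3 - Real.log 2) * e1 - (Real.log 3) * e2
          + (Real.log 2) * e3
      rcases mul_eq_zero.mp h1 with h | h
      · exact absurd h hqp
      · linarith [sub_eq_zero.mp h]
    exact hne (by rw [hA, hB])
  obtain ⟨t₀, ht₀I, ht₀ne⟩ := hex
  have ht₀ : t₀ ∈ Ioo (0:ℝ) 1 := ⟨by linarith [ht₀I.1], by linarith [ht₀I.2]⟩
  set c₁ : ℝ := F ^ u * G ^ v * u / F with hc₁_def
  set c₂ : ℝ := F ^ u * G ^ v * v / G with hc₂_def
  set D : ℝ → ℝ := fun t => c₁ * f t + c₂ * g t - t ^ (a-1) * (1-t) ^ (b-1) with hD_def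
  have hFu : (0:ℝ) < F ^ u * G ^ v := by positivity
  have hexpand : ∀ t : ℝ, F^u*G^v*(u*(f t/F)+v*(g t/G)) = c₁ * f t + c₂ * g t := by
    intro t
    rw [hc₁_def, hc₂_def]
    field_simp
  have hsplit : ∀ t ∈ Ioo (0:ℝ) 1,
      f t ^ u * g t ^ v = F ^ u * G ^ v * ((f t/F) ^ u * (g t/G) ^ v) := by
    intro t ht
    rw [Real.div_rpow (hfpos t ht).le hF.le, Real.div_rpow (hgpos t ht).le hG.le]
    field_simp
  have hDnonneg : ∀ t ∈ Ioo (0:ℝ) 1, 0 ≤ D t := by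
    intro t ht
    have hf' := hfpos t ht
    have hg' := hgpos t ht
    have hle : (f t / F) ^ u * (g t / G) ^ v ≤ u * (f t / F) + v * (g t / G) :=
      Real.geom_mean_le_arith_mean2_weighted hu.le hv.le (by positivity) (by positivity) huv
    have h2 := mul_le_mul_of_nonneg_left hle hFu.le
    rw [hexpand t] at h2
    simp only [hD_def]
    rw [hcombo t ht, hsplit t ht]
    linarith
  have hDt₀ : 0 < D t₀ := by
    have hf' := hfpos t₀ ht₀
    have hg' := hgpos t₀ ht₀
    have hpq : f t₀ / F ≠ g t₀ / G := by
      intro h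
      apply ht₀ne
      field_simp at h
      linarith
    have hlt : (f t₀ / F) ^ u * (g t₀ / G) ^ v < u * (f t₀ / F) + v * (g t₀ / G) :=
      amgm_strict (div_pos hf' hF) (div_pos hg' hG) hu hv huv hpq
    have h2 := (mul_lt_mul_iff_right₀ hFu).mpr hlt
    rw [hexpand t₀] at h2
    simp only [hD_def]
    rw [hcombo t₀ ht₀, hsplit t₀ ht₀]
    linarith
  have hDcont : ContinuousAt D t₀ := by
    have h1t : (1:ℝ) - t₀ ≠ 0 := by
      have := ht₀.2; intro h; linarith [sub_eq_zero.mp h]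
    have hbase : ∀ r : ℝ, ContinuousAt (fun t : ℝ => t ^ r * (1-t) ^ r) t₀ → True := fun _ _ => trivial
    have haux : ∀ x y : ℝ, ContinuousAt (fun t : ℝ => t ^ x * (1-t) ^ y) t₀ := by
      intro x y
      apply ContinuousAt.mul
      · exact Real.continuousAt_rpow_const _ _ (Or.inl ht₀.1.ne')
      · exact (Real.continuousAt_rpow_const _ _ (Or.inl h1t)).comp
          ((continuous_const.sub continuous_id).continuousAt)
    exact (((haux _ _).const_mul c₁).add ((haux _ _).const_mul c₂)).sub (haux _ _)
  obtain ⟨δ, hδ, hball⟩ : ∃ δ > 0, ∀ t, |t - t₀| < δ → 0 < D t := by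
    have h := hDcont.preimage_mem_nhds (Ioi_mem_nhds hDt₀)
    rw [Metric.mem_nhds_iff] at h
    obtain ⟨δ, hδ, hsub⟩ := h
    exact ⟨δ, hδ, fun t ht => hsub (by simpa [Metric.mem_ball, Real.dist_eq] using ht)⟩
  set m : ℝ := min (δ/2) (1/8) with hm_def
  have hm : 0 < m := by
    exact lt_min (by linarith) (by norm_num)
  have hm8 : m ≤ 1/8 := min_le_right _ _
  have hmδ : m ≤ δ/2 := min_le_left _ _
  have hc0 : (0:ℝ) < t₀ - m := by
    have := ht₀I.1; linarith
  have hd1 : t₀ + m < 1 := by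
    have := ht₀I.2; linarith
  have hcd : t₀ - m < t₀ + m := by linarith
  have hiD : IntervalIntegrable D volume 0 1 :=
    ((hif.const_mul c₁).add (hig.const_mul c₂)).sub hic
  have hiD' : IntervalIntegrable D volume (t₀ - m) (t₀ + m) := by
    apply hiD.mono_set
    rw [uIcc_of_le hcd.le, uIcc_of_le (by norm_num : (0:ℝ) ≤ 1)]
    exact Icc_subset_Icc (by linarith) (by linarith)
  have hpos_sub : 0 < ∫ t in (t₀ - m)..(t₀ + m), D t := by
    apply intervalIntegral.intervalIntegral_pos_of_pos_on hiD' _ hcd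
    intro x hx
    apply hball
    rw [abs_lt]
    constructor <;> [linarith [hx.1]; linarith [hx.2]]
  have hae : 0 ≤ᵐ[volume.restrict (Ioc (0:ℝ) 1)] D := by
    have hne1 : ∀ᵐ x : ℝ ∂volume, x ≠ 1 := by
      rw [ae_iff]
      simp only [not_not]
      rw [show {x : ℝ | x = 1} = {1} from Set.setOf_eq_eq_singleton]
      exact Real.volume_singleton
    filter_upwards [ae_restrict_mem measurableSet_Ioc, ae_restrict_of_ae hne1] with x hx hx1
    exact hDnonneg x ⟨hx.1, lt_of_le_of_ne hx.2 hx1⟩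
  have hpos : 0 < ∫ t in (0:ℝ)..1, D t :=
    lt_of_lt_of_le hpos_sub
      (intervalIntegral.integral_mono_interval (by linarith) hcd.le (by linarith) hae hiD)
  have hF_eq : ∫ t in (0:ℝ)..1, f t = F := by rw [hF_def, hf_def, betaFun]
  have hG_eq : ∫ t in (0:ℝ)..1, g t = G := by rw [hG_def, hg_def, betaFun]
  have hB_eq : ∫ t in (0:ℝ)..1, t ^ (a-1) * (1-t) ^ (b-1) = betaFun a b := by rw [betaFun]
  have hInt : ∫ t in (0:ℝ)..1, D t = F^u*G^v - betaFun a b := by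
    simp only [hD_def]
    rw [intervalIntegral.integral_sub ((hif.const_mul c₁).add (hig.const_mul c₂)) hic,
        intervalIntegral.integral_add (hif.const_mul c₁) (hig.const_mul c₂),
        intervalIntegral.integral_const_mul, intervalIntegral.integral_const_mul,
        hF_eq, hG_eq, hB_eq, hc₁_def, hc₂_def]
    field_simp
    linear_combination (F^u*G^v) * huv
  rw [hInt] at hpos
  linarith
end

section
/- For u, v > 0 with u + v = 1 and nonnegative measurable functions f₁, f₂ on [0,1], equality in Hölder's inequality ∫₀¹ f₁f₂ ≤ (∫₀¹ f₁^{1/u})^u (∫₀¹ f₂^{1/v})^v with f₁(t) = [t^{α₁-1}(1-t)^{β₁-1}]^u and f₂(t) = [t^{α₂-1}(1-t)^{β₂-1}]^v holds if and only if α₁ = α₂ and β₁ = β₂. -/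
open Real MeasureTheory Set

lemma betaIntegrable' {a b : ℝ} (ha : 0 < a) (hb : 0 < b) :
    IntervalIntegrable (fun t : ℝ => t ^ (a-1) * (1-t) ^ (b-1)) volume 0 1 := by
  have h1 : IntervalIntegrable (fun t : ℝ => t ^ (a-1) * (1-t) ^ (b-1)) volume 0 (1/2) := by
    apply (intervalIntegral.intervalIntegrable_rpow' (by linarith)).mul_continuousOn
    apply ContinuousOn.rpow_const (continuous_const.sub continuous_id).continuousOn
    intro x hx
    rw [uIcc_of_le (by norm_num)] at hx
    exact Or.inl (by intro h; have := hx.2; norm_num at h; linarith)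
  have h2 : IntervalIntegrable (fun t : ℝ => t ^ (a-1) * (1-t) ^ (b-1)) volume (1/2) 1 := by
    have base : IntervalIntegrable (fun x : ℝ => x ^ (b-1)) volume (1/2) 0 :=
      intervalIntegral.intervalIntegrable_rpow' (by linarith)
    have comp := base.comp_sub_left 1
    norm_num at comp
    apply comp.continuousOn_mul
    apply ContinuousOn.rpow_const continuous_id.continuousOn
    intro x hx
    rw [uIcc_of_le (by norm_num)] at hx
    exact Or.inl (by intro h; have := hx.1; norm_num at h; linarith)
  exact h1.trans h2

lemma betaPos' {a b : ℝ} (ha : 0 < a) (hb : 0 < b) :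
    0 < ∫ t in (0:ℝ)..1, t ^ (a-1) * (1-t) ^ (b-1) :=
  intervalIntegral.intervalIntegral_pos_of_pos_on (betaIntegrable' ha hb)
    (fun x hx => mul_pos (rpow_pos_of_pos hx.1 _) (rpow_pos_of_pos (by linarith [hx.2]) _))
    one_pos

lemma young_strict' {u v x y : ℝ} (hu : 0 < u) (hv : 0 < v) (huv : u + v = 1)
    (hx : 0 ≤ x) (hy : 0 ≤ y) (hxy : x ≠ y) : x ^ u * y ^ v < u * x + v * y := by
  rcases hx.eq_or_lt with rfl | hx'
  · have hy' : 0 < y := hy.lt_of_ne (fun h => hxy h)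
    rw [Real.zero_rpow hu.ne', zero_mul]
    positivity
  rcases hy.eq_or_lt with rfl | hy'
  · rw [Real.zero_rpow hv.ne', mul_zero]
    positivity
  have key := strictConcaveOn_log_Ioi.2 (mem_Ioi.mpr hx') (mem_Ioi.mpr hy') hxy hu hv huv
  calc x ^ u * y ^ v = Real.exp (Real.log x * u) * Real.exp (Real.log y * v) := by
        rw [Real.rpow_def_of_pos hx', Real.rpow_def_of_pos hy']
    _ = Real.exp (u * Real.log x + v * Real.log y) := by rw [← Real.exp_add]; ring_nf
    _ < Real.exp (Real.log (u * x + v * y)) := by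
        apply Real.exp_lt_exp.mpr
        simpa [smul_eq_mul] using key
    _ = u * x + v * y := Real.exp_log (by positivity)

theorem stmt_6 (α₁ β₁ α₂ β₂ u v : ℝ)
    (hα₁ : 0 < α₁) (hβ₁ : 0 < β₁) (hα₂ : 0 < α₂) (hβ₂ : 0 < β₂)
    (hu : 0 < u) (hv : 0 < v) (huv : u + v = 1)
    (f₁ f₂ : ℝ → ℝ)
    (hf₁ : ∀ t, f₁ t = (t ^ (α₁ - 1) * (1 - t) ^ (β₁ - 1)) ^ u)
    (hf₂ : ∀ t, f₂ t = (t ^ (α₂ - 1) * (1 - t) ^ (β₂ - 1)) ^ v) :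
    (∫ t in (0 : ℝ)..1, f₁ t * f₂ t)
      = (∫ t in (0 : ℝ)..1, f₁ t ^ (1 / u)) ^ u * (∫ t in (0 : ℝ)..1, f₂ t ^ (1 / v)) ^ v
    ↔ (α₁ = α₂ ∧ β₁ = β₂) := by
  set g₁ : ℝ → ℝ := fun t => t ^ (α₁ - 1) * (1 - t) ^ (β₁ - 1) with hg₁
  set g₂ : ℝ → ℝ := fun t => t ^ (α₂ - 1) * (1 - t) ^ (β₂ - 1) with hg₂
  have hg₁nn : ∀ t ∈ Icc (0:ℝ) 1, 0 ≤ g₁ t := fun t ht =>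
    mul_nonneg (Real.rpow_nonneg ht.1 _) (Real.rpow_nonneg (by linarith [ht.2]) _)
  have hg₂nn : ∀ t ∈ Icc (0:ℝ) 1, 0 ≤ g₂ t := fun t ht =>
    mul_nonneg (Real.rpow_nonneg ht.1 _) (Real.rpow_nonneg (by linarith [ht.2]) _)
  set A : ℝ := ∫ t in (0:ℝ)..1, g₁ t with hA_def
  set B : ℝ := ∫ t in (0:ℝ)..1, g₂ t with hB_def
  have hg1i : IntervalIntegrable g₁ volume 0 1 := betaIntegrable' hα₁ hβ₁
  have hg2i : IntervalIntegrable g₂ volume 0 1 := betaIntegrable' hα₂ hβ₂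
  have hA : 0 < A := betaPos' hα₁ hβ₁
  have hB : 0 < B := betaPos' hα₂ hβ₂
  have e₁ : (∫ t in (0:ℝ)..1, f₁ t * f₂ t) = ∫ t in (0:ℝ)..1, g₁ t ^ u * g₂ t ^ v := by
    apply intervalIntegral.integral_congr
    intro t _
    show f₁ t * f₂ t = g₁ t ^ u * g₂ t ^ v
    rw [hf₁, hf₂]
  have e₂ : (∫ t in (0:ℝ)..1, f₁ t ^ (1/u)) = A := by
    apply intervalIntegral.integral_congr
    intro t ht
    rw [uIcc_of_le zero_le_one] at ht
    show f₁ t ^ (1/u) = g₁ t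
    rw [hf₁, ← Real.rpow_mul (hg₁nn t ht), mul_one_div_cancel hu.ne', Real.rpow_one]
  have e₃ : (∫ t in (0:ℝ)..1, f₂ t ^ (1/v)) = B := by
    apply intervalIntegral.integral_congr
    intro t ht
    rw [uIcc_of_le zero_le_one] at ht
    show f₂ t ^ (1/v) = g₂ t
    rw [hf₂, ← Real.rpow_mul (hg₂nn t ht), mul_one_div_cancel hv.ne', Real.rpow_one]
  rw [e₁, e₂, e₃]
  constructor
  · intro heq
    by_contra hne
    -- find a point where proportionality fails
    have hex : ∃ t₀ ∈ Ioo (0:ℝ) 1, g₁ t₀ * B ≠ g₂ t₀ * A := by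
      by_contra hcon
      push_neg at hcon
      have key : ∀ t ∈ Ioo (0:ℝ) 1,
          (α₁-1) * Real.log t + (β₁-1) * Real.log (1-t) + Real.log B
            = (α₂-1) * Real.log t + (β₂-1) * Real.log (1-t) + Real.log A := by
        intro t ht
        have ht1 : 0 < t := ht.1
        have ht2 : 0 < 1 - t := by linarith [ht.2]
        have h := congrArg Real.log (hcon t ht)
        rw [hg₁, hg₂] at h
        simp only at h
        rw [Real.log_mul (by positivity) hB.ne', Real.log_mul (by positivity) hA.ne',
          Real.log_mul (by positivity) (by positivity), Real.log_mul (by positivity) (by positivity),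
          Real.log_rpow ht1, Real.log_rpow ht2, Real.log_rpow ht1, Real.log_rpow ht2] at h
        linarith [h]
      have E1 := key (1/2) (by norm_num)
      have E2 := key (1/4) (by norm_num)
      have E3 := key (3/4) (by norm_num)
      norm_num at E1 E2 E3
      have l12 : Real.log (1/2) = -Real.log 2 := by
        rw [one_div, Real.log_inv]
      have l14 : Real.log (1/4) = -(2 * Real.log 2) := by
        rw [one_div, Real.log_inv, show (4:ℝ) = 2^2 by norm_num, Real.log_pow]
        push_cast; ring
      have l34 : Real.log (3/4) = Real.log 3 - 2 * Real.log 2 := by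
        rw [Real.log_div (by norm_num) (by norm_num), show (4:ℝ) = 2^2 by norm_num, Real.log_pow]
        push_cast; ring
      rw [l12] at E1
      rw [l14, l34] at E2 E3
      have h3 : (0:ℝ) < Real.log 3 := Real.log_pos (by norm_num)
      have h43 : Real.log 3 < 2 * Real.log 2 := by
        have := Real.log_lt_log (by norm_num : (0:ℝ) < 3) (by norm_num : (3:ℝ) < 4)
        rw [show (4:ℝ) = 2^2 by norm_num, Real.log_pow] at this
        push_cast at this; linarith
      -- from E2 - E3 : (β₁-β₂ - (α₁-α₂)) * log 3 = 0
      have hpq : ((β₁ - β₂) - (α₁ - α₂)) * Real.log 3 = 0 := by linear_combination E2 - E3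
      have hpq' : (β₁ - β₂) = (α₁ - α₂) := by
        rcases mul_eq_zero.mp hpq with h | h
        · linarith
        · exact absurd h h3.ne'
      have hq : (α₁ - α₂) * (2 * Real.log 2 - Real.log 3) = 0 := by
        linear_combination E1 - E2 + (Real.log 3 - Real.log 2) * hpq'
      have hα : α₁ = α₂ := by
        rcases mul_eq_zero.mp hq with h | h
        · linarith
        · linarith
      exact hne ⟨hα, by linarith [hpq', hα]⟩
    obtain ⟨t₀, ht₀, hne0⟩ := hex
    set a : ℝ := u * α₁ + v * α₂ with ha_def
    set b : ℝ := u * β₁ + v * β₂ with hb_def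
    have ha : 0 < a := by positivity
    have hb : 0 < b := by positivity
    set G : ℝ → ℝ := fun t => g₁ t ^ u * g₂ t ^ v with hG_def
    have hGeq : ∀ t ∈ Ioo (0:ℝ) 1, G t = t ^ (a-1) * (1-t) ^ (b-1) := by
      intro t ht
      have ht1 : 0 < t := ht.1
      have ht2 : 0 < 1 - t := by linarith [ht.2]
      have e : G t = t ^ ((α₁-1)*u) * (1-t) ^ ((β₁-1)*u)
          * (t ^ ((α₂-1)*v) * (1-t) ^ ((β₂-1)*v)) := by
        show (t ^ (α₁ - 1) * (1 - t) ^ (β₁ - 1)) ^ u * (t ^ (α₂ - 1) * (1 - t) ^ (β₂ - 1)) ^ v = _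
        rw [Real.mul_rpow (Real.rpow_nonneg ht1.le _) (Real.rpow_nonneg ht2.le _),
          Real.mul_rpow (Real.rpow_nonneg ht1.le _) (Real.rpow_nonneg ht2.le _),
          ← Real.rpow_mul ht1.le, ← Real.rpow_mul ht2.le, ← Real.rpow_mul ht1.le,
          ← Real.rpow_mul ht2.le]
      rw [e, show t ^ ((α₁-1)*u) * (1-t) ^ ((β₁-1)*u) * (t ^ ((α₂-1)*v) * (1-t) ^ ((β₂-1)*v))
          = (t ^ ((α₁-1)*u) * t ^ ((α₂-1)*v)) * ((1-t) ^ ((β₁-1)*u) * (1-t) ^ ((β₂-1)*v)) by ring,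
        ← Real.rpow_add ht1, ← Real.rpow_add ht2,
        show (α₁-1)*u + (α₂-1)*v = a - 1 by rw [ha_def]; linear_combination -huv,
        show (β₁-1)*u + (β₂-1)*v = b - 1 by rw [hb_def]; linear_combination -huv]
    have hIG : IntervalIntegrable G volume 0 1 := by
      rw [intervalIntegrable_iff_integrableOn_Ioo_of_le zero_le_one]
      have hbeta := betaIntegrable' ha hb
      rw [intervalIntegrable_iff_integrableOn_Ioo_of_le zero_le_one] at hbeta
      exact hbeta.congr_fun (fun t ht => (hGeq t ht).symm) measurableSet_Ioo
    set H : ℝ → ℝ := fun t => u * (A ^ (u-1) * B ^ v) * g₁ t + v * (A ^ u * B ^ (v-1)) * g₂ t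
      with hH_def
    have hIH : IntervalIntegrable H volume 0 1 := (hg1i.const_mul _).add (hg2i.const_mul _)
    have hAu : (0:ℝ) < A ^ u := Real.rpow_pos_of_pos hA u
    have hBv : (0:ℝ) < B ^ v := Real.rpow_pos_of_pos hB v
    have hGexp : ∀ t, 0 ≤ g₁ t → 0 ≤ g₂ t →
        G t = A ^ u * B ^ v * ((g₁ t / A) ^ u * (g₂ t / B) ^ v) := by
      intro t h1 h2
      show g₁ t ^ u * g₂ t ^ v = _
      rw [Real.div_rpow h1 hA.le, Real.div_rpow h2 hB.le]
      field_simp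
    have hHexp : ∀ t, H t = A ^ u * B ^ v * (u * (g₁ t / A) + v * (g₂ t / B)) := by
      intro t
      show u * (A ^ (u-1) * B ^ v) * g₁ t + v * (A ^ u * B ^ (v-1)) * g₂ t = _
      rw [Real.rpow_sub hA, Real.rpow_sub hB, Real.rpow_one, Real.rpow_one]
      field_simp
    have hle : ∀ t ∈ Icc (0:ℝ) 1, G t ≤ H t := by
      intro t ht
      have h1 := hg₁nn t ht
      have h2 := hg₂nn t ht
      have key := Real.geom_mean_le_arith_mean2_weighted hu.le hv.le
        (div_nonneg h1 hA.le) (div_nonneg h2 hB.le) huv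
      rw [hGexp t h1 h2, hHexp t]
      exact mul_le_mul_of_nonneg_left key (mul_pos hAu hBv).le
    have ht0Icc : t₀ ∈ Icc (0:ℝ) 1 := ⟨ht₀.1.le, ht₀.2.le⟩
    have hstrict : G t₀ < H t₀ := by
      have h1 := hg₁nn t₀ ht0Icc
      have h2 := hg₂nn t₀ ht0Icc
      have hxy : g₁ t₀ / A ≠ g₂ t₀ / B := by
        intro hcon
        exact hne0 ((div_eq_div_iff hA.ne' hB.ne').mp hcon)
      have key := young_strict' hu hv huv (div_nonneg h1 hA.le) (div_nonneg h2 hB.le) hxy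
      rw [hGexp t₀ h1 h2, hHexp t₀]
      exact mul_lt_mul_of_pos_left key (mul_pos hAu hBv)
    set c : ℝ := t₀ / 2 with hc_def
    set d : ℝ := (t₀ + 1) / 2 with hd_def
    have hc0 : 0 < c := by rw [hc_def]; linarith [ht₀.1]
    have hcd : c < d := by rw [hc_def, hd_def]; linarith [ht₀.2]
    have hd1 : d < 1 := by rw [hd_def]; linarith [ht₀.2]
    have hct0 : c ≤ t₀ := by rw [hc_def]; linarith [ht₀.1]
    have ht0d : t₀ ≤ d := by rw [hd_def]; linarith [ht₀.2]
    have hne_t : ∀ x ∈ Icc c d, x ≠ 0 := fun x hx => (lt_of_lt_of_le hc0 hx.1).ne'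
    have hne_1t : ∀ x ∈ Icc c d, (1:ℝ) - x ≠ 0 :=
      fun x hx => (sub_pos.mpr (lt_of_le_of_lt hx.2 hd1)).ne'
    have hcont1 : ContinuousOn g₁ (Icc c d) := by
      show ContinuousOn (fun t : ℝ => t ^ (α₁ - 1) * (1 - t) ^ (β₁ - 1)) (Icc c d)
      exact (continuousOn_id.rpow_const fun x hx => Or.inl (hne_t x hx)).mul
        (((continuous_const.sub continuous_id).continuousOn).rpow_const
          fun x hx => Or.inl (hne_1t x hx))
    have hcont2 : ContinuousOn g₂ (Icc c d) := by
      show ContinuousOn (fun t : ℝ => t ^ (α₂ - 1) * (1 - t) ^ (β₂ - 1)) (Icc c d)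
      exact (continuousOn_id.rpow_const fun x hx => Or.inl (hne_t x hx)).mul
        (((continuous_const.sub continuous_id).continuousOn).rpow_const
          fun x hx => Or.inl (hne_1t x hx))
    have hGc : ContinuousOn G (Icc c d) :=
      (hcont1.rpow_const fun x _ => Or.inr hu.le).mul
        (hcont2.rpow_const fun x _ => Or.inr hv.le)
    have hHc : ContinuousOn H (Icc c d) :=
      (continuousOn_const.mul hcont1).add (continuousOn_const.mul hcont2)
    have subInt : ∀ x y : ℝ, x ∈ Icc (0:ℝ) 1 → y ∈ Icc (0:ℝ) 1 → ∀ {f : ℝ → ℝ},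
        IntervalIntegrable f volume 0 1 → IntervalIntegrable f volume x y := by
      intro x y hx hy f hf
      apply hf.mono_set
      apply uIcc_subset_uIcc <;> rw [uIcc_of_le zero_le_one]
      exacts [hx, hy]
    have hmemc : c ∈ Icc (0:ℝ) 1 := ⟨hc0.le, by linarith⟩
    have hmemd : d ∈ Icc (0:ℝ) 1 := ⟨by linarith, hd1.le⟩
    have hmem0 : (0:ℝ) ∈ Icc (0:ℝ) 1 := ⟨le_refl _, zero_le_one⟩
    have hmem1 : (1:ℝ) ∈ Icc (0:ℝ) 1 := ⟨zero_le_one, le_refl _⟩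
    have splitG : (∫ t in (0:ℝ)..c, G t) + (∫ t in c..d, G t) + (∫ t in d..1, G t)
        = ∫ t in (0:ℝ)..1, G t := by
      rw [intervalIntegral.integral_add_adjacent_intervals
          (subInt 0 c hmem0 hmemc hIG) (subInt c d hmemc hmemd hIG),
        intervalIntegral.integral_add_adjacent_intervals
          (subInt 0 d hmem0 hmemd hIG) (subInt d 1 hmemd hmem1 hIG)]
    have splitH : (∫ t in (0:ℝ)..c, H t) + (∫ t in c..d, H t) + (∫ t in d..1, H t)
        = ∫ t in (0:ℝ)..1, H t := by
      rw [intervalIntegral.integral_add_adjacent_intervals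
          (subInt 0 c hmem0 hmemc hIH) (subInt c d hmemc hmemd hIH),
        intervalIntegral.integral_add_adjacent_intervals
          (subInt 0 d hmem0 hmemd hIH) (subInt d 1 hmemd hmem1 hIH)]
    have i1 : (∫ t in (0:ℝ)..c, G t) ≤ ∫ t in (0:ℝ)..c, H t :=
      intervalIntegral.integral_mono_on hc0.le (subInt 0 c hmem0 hmemc hIG)
        (subInt 0 c hmem0 hmemc hIH)
        (fun x hx => hle x ⟨hx.1, hx.2.trans hmemc.2⟩)
    have i2 : (∫ t in c..d, G t) < ∫ t in c..d, H t :=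
      intervalIntegral.integral_lt_integral_of_continuousOn_of_le_of_exists_lt hcd hGc hHc
        (fun x hx => hle x ⟨hc0.le.trans hx.1.le, hx.2.trans hd1.le⟩)
        ⟨t₀, ⟨hct0, ht0d⟩, hstrict⟩
    have i3 : (∫ t in d..1, G t) ≤ ∫ t in d..1, H t :=
      intervalIntegral.integral_mono_on hd1.le (subInt d 1 hmemd hmem1 hIG)
        (subInt d 1 hmemd hmem1 hIH)
        (fun x hx => hle x ⟨hmemd.1.trans hx.1, hx.2⟩)
    have final : (∫ t in (0:ℝ)..1, G t) < ∫ t in (0:ℝ)..1, H t := by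
      rw [← splitG, ← splitH]; linarith
    have hHint : (∫ t in (0:ℝ)..1, H t) = A ^ u * B ^ v := by
      have hexp : (∫ t in (0:ℝ)..1, H t)
          = u * (A ^ (u-1) * B ^ v) * A + v * (A ^ u * B ^ (v-1)) * B := by
        rw [hH_def]
        rw [intervalIntegral.integral_add (hg1i.const_mul _) (hg2i.const_mul _),
          intervalIntegral.integral_const_mul, intervalIntegral.integral_const_mul,
          ← hA_def, ← hB_def]
      rw [hexp]
      have e1 : A ^ (u-1) * A = A ^ u := by
        rw [Real.rpow_sub hA, Real.rpow_one, div_mul_cancel₀ _ hA.ne']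
      have e2 : B ^ (v-1) * B = B ^ v := by
        rw [Real.rpow_sub hB, Real.rpow_one, div_mul_cancel₀ _ hB.ne']
      linear_combination (u * B ^ v) * e1 + (v * A ^ u) * e2 + (A ^ u * B ^ v) * huv
    exact (final.trans_eq hHint).ne heq
  · rintro ⟨h1, h2⟩
    subst h1; subst h2
    have : (∫ t in (0:ℝ)..1, g₁ t ^ u * g₂ t ^ v) = A := by
      rw [hA_def]
      apply intervalIntegral.integral_congr
      intro t ht
      rw [uIcc_of_le zero_le_one] at ht
      have hnn := hg₁nn t ht
      rw [hg₁, hg₂]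
      simp only
      rw [← Real.rpow_add' hnn (by rw [huv]; norm_num), huv, Real.rpow_one]
    rw [this, ← Real.rpow_add' hA.le (by rw [huv]; norm_num), huv, Real.rpow_one]
end
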